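/- If G is dynamically ℓ-minimal in a hereditary graph class F with ℓ ≥ 5, and a vertex u of G lies on a triangle, then the degree of u is at least ℓ. -/

import Mathlib

open Finset

open scoped Classical in
noncomputable def deg {V : Type*} [Fintype V] (G : SimpleGraph V) (v : V) : ℕ :=
  (Finset.univ.filter (fun u => G.Adj v u)).card

def IsProper {V : Type*} (G : SimpleGraph V) (c : V → ℕ) : Prop :=
  ∀ u v, G.Adj u v → c u ≠ c v

def IsDynamic {V : Type*} [Fintype V] (G : SimpleGraph V) (c : V → ℕ) : Prop :=
  IsProper G c ∧ ∀ v, 2 ≤ deg G v → ∃ a b, G.Adj v a ∧ G.Adj v b ∧ c a ≠ c b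

noncomputable def chrom {V : Type*} (G : SimpleGraph V) : ℕ :=
  sInf {n | ∃ c : V → ℕ, (∀ v, c v < n) ∧ IsProper G c}

noncomputable def dynChrom {V : Type*} [Fintype V] (G : SimpleGraph V) : ℕ :=
  sInf {n | ∃ c : V → ℕ, (∀ v, c v < n) ∧ IsDynamic G c}

def subdiv {V : Type*} (G : SimpleGraph V) : SimpleGraph (V ⊕ G.edgeSet) where
  Adj x y :=
    match x, y with
    | Sum.inl u, Sum.inr e => u ∈ (e : Sym2 V)
    | Sum.inr e, Sum.inl u => u ∈ (e : Sym2 V)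
    | _, _ => False
  symm := ⟨by rintro (u | e) (v | f) h <;> first | exact h | exact h.elim⟩
  loopless := ⟨by rintro (u | e) h <;> exact h⟩

noncomputable instance {V : Type*} [Fintype V] (G : SimpleGraph V) : Fintype G.edgeSet :=
  Fintype.ofFinite _

def Choosable {V : Type*} (G : SimpleGraph V) (ℓ : ℕ) : Prop :=
  ∀ L : V → Finset ℕ, (∀ v, (L v).card = ℓ) →
    ∃ c : V → ℕ, (∀ v, c v ∈ L v) ∧ IsProper G c

def DynChoosable {V : Type*} [Fintype V] (G : SimpleGraph V) (ℓ : ℕ) : Prop :=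
  ∀ L : V → Finset ℕ, (∀ v, (L v).card = ℓ) →
    ∃ c : V → ℕ, (∀ v, c v ∈ L v) ∧ IsDynamic G c

noncomputable def listChrom {V : Type*} (G : SimpleGraph V) : ℕ :=
  sInf {ℓ | Choosable G ℓ}

noncomputable def dynListChrom {V : Type*} [Fintype V] (G : SimpleGraph V) : ℕ :=
  sInf {ℓ | DynChoosable G ℓ}

open scoped Classical in
noncomputable def nedges {n : ℕ} (G : SimpleGraph (Fin n)) : ℕ :=
  (Finset.univ.filter (fun e : Sym2 (Fin n) => e ∈ G.edgeSet)).card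

noncomputable def gsize {n : ℕ} (G : SimpleGraph (Fin n)) : ℕ := n + nedges G

/-- `F` is hereditary: it is closed under taking subgraphs (up to isomorphism). -/
def Hereditary (F : ∀ n : ℕ, SimpleGraph (Fin n) → Prop) : Prop :=
  ∀ (n m : ℕ) (G : SimpleGraph (Fin n)) (H : SimpleGraph (Fin m)),
    F n G → (∃ f : Fin m ↪ Fin n, ∀ u v, H.Adj u v → G.Adj (f u) (f v)) → F m H

/-- `G` is dynamically `ℓ`-minimal in the class `F`. -/
def DynMinimal (F : ∀ n : ℕ, SimpleGraph (Fin n) → Prop) (ℓ : ℕ)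
    {n : ℕ} (G : SimpleGraph (Fin n)) : Prop :=
  F n G ∧ ¬ DynChoosable G ℓ ∧
    ∀ (m : ℕ) (H : SimpleGraph (Fin m)), F m H → gsize H < gsize G → DynChoosable H ℓ

/-!
Suppose `deg G u < ℓ` for a vertex `u` of a triangle `uvw`. Let `X` be the neighbours of `u` of
degree two other than `v` and `w`; by minimality, `G - ({u} ∪ X)` has a dynamic coloring from the
lists. Give `u` a color different from that of each neighbour, where a neighbour `x ∈ X` is replaced
by its other neighbour `y x`: fewer than `ℓ` constraints. Then color `X` greedily in increasing
order, each `x` avoiding `u`, `y x` and one earlier-colored neighbour `T x` of `y x`: three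
constraints, so `ℓ ≥ 4` suffices. The edge `vw` makes `u` dynamic; a vertex adjacent to `X` is made
dynamic by its last-colored neighbour `x ∈ X` and `T x`. A vertex not adjacent to `X` that keeps
fewer than two neighbours in `G - ({u} ∪ X)` has degree two and is adjacent to `u`, so it is `v` or
`w`, and sees `u` and the other one.
-/

section Restriction

open scoped Classical

variable {V : Type*}

def IsDynamicOn (G : SimpleGraph V) (S : Finset V) (c : V → ℕ) : Prop :=
  (∀ p ∈ S, ∀ q ∈ S, G.Adj p q → c p ≠ c q) ∧
    ∀ p ∈ S, 2 ≤ #{q ∈ S | G.Adj p q} → ∃ a ∈ S, ∃ b ∈ S, G.Adj p a ∧ G.Adj p b ∧ c a ≠ c b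

theorem IsDynamicOn.congr {G : SimpleGraph V} {S : Finset V} {c c' : V → ℕ}
    (h : IsDynamicOn G S c) (hcc' : ∀ p ∈ S, c p = c' p) : IsDynamicOn G S c' := by
  refine ⟨fun p hp q hq hpq => ?_, fun p hp h2 => ?_⟩
  · rw [← hcc' p hp, ← hcc' q hq]
    exact h.1 p hp q hq hpq
  · obtain ⟨a, ha, b, hb, hpa, hpb, hab⟩ := h.2 p hp h2
    exact ⟨a, ha, b, hb, hpa, hpb, by rwa [← hcc' a ha, ← hcc' b hb]⟩

theorem deg_eq_degree [Fintype V] (G : SimpleGraph V) (v : V) : deg G v = G.degree v := by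
  rw [← G.card_neighborFinset_eq_degree, G.neighborFinset_eq_filter]
  rfl

theorem deg_comap {W : Type*} [Fintype W] (G : SimpleGraph V) (f : W ↪ V) (w : W) :
    deg (G.comap f) w = #{q ∈ univ.map f | G.Adj (f w) q} := by
  rw [filter_map, card_map]
  rfl

theorem DynChoosable.exists_isDynamicOn_map {W : Type*} [Fintype W] {G : SimpleGraph V} {ℓ : ℕ}
    (f : W ↪ V) (h : DynChoosable (G.comap f) ℓ) (L : V → Finset ℕ) (hL : ∀ p, #(L p) = ℓ) :
    ∃ c : V → ℕ, (∀ p ∈ univ.map f, c p ∈ L p) ∧ IsDynamicOn G (univ.map f) c := by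
  obtain ⟨c₀, hc₀L, hc₀proper, hc₀dyn⟩ := h (L ∘ f) fun w => hL (f w)
  have hc : ∀ w, Function.extend f c₀ 0 (f w) = c₀ w := f.injective.extend_apply c₀ 0
  refine ⟨Function.extend f c₀ 0, ?_, ?_, ?_⟩
  · simp only [mem_map, mem_univ, true_and, forall_exists_index, forall_apply_eq_imp_iff]
    intro w
    rw [hc]
    exact hc₀L w
  · simp only [mem_map, mem_univ, true_and, forall_exists_index, forall_apply_eq_imp_iff]
    intro a b hab
    rw [hc, hc]
    exact hc₀proper a b hab
  · simp only [mem_map, mem_univ, true_and, forall_exists_index, forall_apply_eq_imp_iff]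
    intro p hp
    obtain ⟨a, b, ha, hb, hab⟩ := hc₀dyn p (by rwa [deg_comap])
    exact ⟨f a, ⟨a, rfl⟩, f b, ⟨b, rfl⟩, ha, hb, by rwa [hc, hc]⟩

theorem nedges_comap_le {m n : ℕ} (G : SimpleGraph (Fin n)) (f : Fin m ↪ Fin n) :
    nedges (G.comap f) ≤ nedges G := by
  refine card_le_card_of_injOn (Sym2.map f) ?_ (Sym2.map.injective f.injective).injOn
  intro e he
  induction e with
  | _ a b => simpa using he

theorem DynMinimal.dynChoosable_comap {F : ∀ n : ℕ, SimpleGraph (Fin n) → Prop}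
    (hF : Hereditary F) {ℓ n m : ℕ} {G : SimpleGraph (Fin n)} (hG : DynMinimal F ℓ G)
    (f : Fin m ↪ Fin n) (hmn : m < n) : DynChoosable (G.comap f) ℓ :=
  hG.2.2 m _ (hF n m G _ hG.1 ⟨f, fun _ _ h => h⟩) <| by
    have := nedges_comap_le G f
    unfold gsize
    omega

theorem DynMinimal.exists_isDynamicOn {F : ∀ n : ℕ, SimpleGraph (Fin n) → Prop}
    (hF : Hereditary F) {ℓ n : ℕ} {G : SimpleGraph (Fin n)} (hG : DynMinimal F ℓ G)
    (S : Finset (Fin n)) {p : Fin n} (hp : p ∉ S) (L : Fin n → Finset ℕ) (hL : ∀ p, #(L p) = ℓ) :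
    ∃ c : Fin n → ℕ, (∀ p ∈ S, c p ∈ L p) ∧ IsDynamicOn G S c := by
  have hm : #S < n := by simpa using card_lt_univ_of_notMem hp
  simpa only [map_orderEmbOfFin_univ] using
    (hG.dynChoosable_comap hF (S.orderEmbOfFin rfl).toEmbedding hm).exists_isDynamicOn_map _ L hL

end Restriction

theorem exists_greedy_coloring {V : Type*} [LinearOrder V] (X : Finset V) (base : V → ℕ)
    (L : V → Finset ℕ) (A : V → Finset V) (hA : ∀ x ∈ X, #(A x) < #(L x)) :
    ∃ c : V → ℕ, (∀ p ∉ X, c p = base p) ∧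
      ∀ x ∈ X, c x ∈ L x ∧ ∀ t ∈ A x, (t ∉ X ∨ t < x) → c x ≠ c t := by
  induction X using Finset.induction_on_max with
  | empty => exact ⟨base, fun _ _ => rfl, by simp⟩
  | insert a X hlt ih =>
    obtain ⟨c, hbase, hc⟩ := ih fun x hx => hA x (mem_insert_of_mem hx)
    obtain ⟨k, hkL, hkA⟩ := exists_mem_notMem_of_card_lt_card
      (card_image_le.trans_lt (hA a (mem_insert_self a X)) : #((A a).image c) < #(L a))
    have hupd : ∀ p ≠ a, Function.update c a k p = c p := fun p hp => Function.update_of_ne hp k c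
    refine ⟨Function.update c a k, fun p hp => ?_, fun x hx => ?_⟩
    · rw [mem_insert, not_or] at hp
      rw [hupd p hp.1, hbase p hp.2]
    obtain rfl | hxX := mem_insert.mp hx
    · refine ⟨by simpa using hkL, fun t ht hord => ?_⟩
      have hta : t ≠ x := by rintro rfl; simp at hord
      rw [Function.update_self, hupd t hta]
      exact fun h => hkA (mem_image.mpr ⟨t, ht, h.symm⟩)
    · have hxa : x ≠ a := (hlt x hxX).ne
      refine ⟨by simpa [hupd x hxa] using (hc x hxX).1, fun t ht hord => ?_⟩
      have hta : t ≠ a := by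
        rintro rfl
        simp only [mem_insert, true_or, not_true, false_or] at hord
        exact lt_asymm hord (hlt x hxX)
      rw [hupd x hxa, hupd t hta]
      refine (hc x hxX).2 t ht (hord.imp (fun h => ?_) id)
      exact fun h' => h (mem_insert_of_mem h')

theorem SimpleGraph.exists_neighborFinset_eq_pair {V : Type*} [Fintype V] [DecidableEq V]
    {G : SimpleGraph V} [DecidableRel G.Adj] {x u : V} (hx : G.degree x = 2) (hxu : G.Adj x u) :
    ∃ p, p ≠ u ∧ G.neighborFinset x = {u, p} := by
  obtain ⟨a, b, hab, hN⟩ := card_eq_two.mp ((G.card_neighborFinset_eq_degree x).trans hx)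
  have hu : u ∈ G.neighborFinset x := (G.mem_neighborFinset x u).mpr hxu
  rw [hN, mem_insert, mem_singleton] at hu
  obtain rfl | rfl := hu
  · exact ⟨b, hab.symm, hN⟩
  · exact ⟨a, hab, hN.trans (pair_comm a u)⟩

section Triangle

open scoped Classical

variable {V : Type*} [Fintype V]

noncomputable def degTwoNeighbors (G : SimpleGraph V) (u v w : V) : Finset V :=
  {x ∈ G.neighborFinset u | G.degree x = 2 ∧ x ≠ v ∧ x ≠ w}

theorem mem_degTwoNeighbors {G : SimpleGraph V} {u v w x : V} :
    x ∈ degTwoNeighbors G u v w ↔ G.Adj u x ∧ G.degree x = 2 ∧ x ≠ v ∧ x ≠ w := by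
  simp [degTwoNeighbors]

theorem exists_other_neighbor_of_mem_degTwoNeighbors (G : SimpleGraph V) (u v w : V) :
    ∃ y : V → V, ∀ x ∈ degTwoNeighbors G u v w,
      y x ≠ u ∧ ∀ q, G.Adj x q ↔ q = u ∨ q = y x := by
  choose! y hyu hy using fun x (hx : x ∈ degTwoNeighbors G u v w) =>
    G.exists_neighborFinset_eq_pair (mem_degTwoNeighbors.1 hx).2.1 (mem_degTwoNeighbors.1 hx).1.symm
  refine ⟨y, fun x hx => ⟨hyu x hx, fun q => ?_⟩⟩
  rw [← G.mem_neighborFinset, hy x hx, mem_insert, mem_singleton]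

variable [LinearOrder V] {G : SimpleGraph V} {u v w : V} {X : Finset V} {y T : V → V} {c : V → ℕ}

theorem isProper_of_isDynamicOn_compl (hXu : ∀ x ∈ X, G.Adj u x)
    (hy : ∀ x ∈ X, y x ≠ u ∧ ∀ q, G.Adj x q ↔ q = u ∨ q = y x)
    (hcD : IsDynamicOn G (insert u X)ᶜ c) (hcu : ∀ q, G.Adj u q → q ∉ X → c u ≠ c q)
    (hcX : ∀ x ∈ X, ∀ t ∈ ({u, y x, T x} : Finset V), (t ∉ X ∨ t < x) → c x ≠ c t) :
    IsProper G c := by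
  have huX : u ∉ X := fun h => G.loopless.irrefl u (hXu u h)
  have hxu : ∀ x ∈ X, c x ≠ c u := fun x hx => hcX x hx u (by simp) (Or.inl huX)
  have hD : ∀ p ∈ insert u X, ∀ q, G.Adj p q → c p ≠ c q := by
    intro p hp q hpq
    rcases mem_insert.mp hp with rfl | hpX
    · by_cases hqX : q ∈ X
      · exact (hxu q hqX).symm
      · exact hcu q hpq hqX
    rcases ((hy p hpX).2 q).mp hpq with rfl | rfl
    · exact hxu p hpX
    by_cases hqX : y p ∈ X
    · -- `p` and `y p` are adjacent degree-two vertices: the later one avoids the earlier one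
      have hp : y (y p) = p :=
        (((hy _ hqX).2 p).mp hpq.symm).resolve_left (fun h => huX (h ▸ hpX)) |>.symm
      rcases lt_or_gt_of_ne hpq.ne with hlt | hlt
      · exact (hcX _ hqX p (by simp [hp]) (Or.inr hlt)).symm
      · exact hcX p hpX _ (by simp) (Or.inr hlt)
    · exact hcX p hpX _ (by simp) (Or.inl hqX)
  intro p q hpq
  by_cases hp : p ∈ insert u X
  · exact hD p hp q hpq
  by_cases hq : q ∈ insert u X
  · exact (hD q hq p hpq.symm).symm
  exact hcD.1 p (mem_compl.2 hp) q (mem_compl.2 hq) hpq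

theorem exists_adj_color_ne_of_adj_mem
    (hy : ∀ x ∈ X, y x ≠ u ∧ ∀ q, G.Adj x q ↔ q = u ∨ q = y x)
    (hT : ∀ x t, G.Adj (y x) t → (t ∉ X ∨ t < x) → G.Adj (y x) (T x) ∧ (T x ∉ X ∨ T x < x))
    (hcX : ∀ x ∈ X, ∀ t ∈ ({u, y x, T x} : Finset V), (t ∉ X ∨ t < x) → c x ≠ c t)
    {p : V} (hpu : p ≠ u) (hp : 2 ≤ G.degree p) (hpX : ∃ x ∈ X, G.Adj p x) :
    ∃ a b, G.Adj p a ∧ G.Adj p b ∧ c a ≠ c b := by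
  set N := {x ∈ X | G.Adj p x}
  have hN : N.Nonempty := by
    obtain ⟨x, hx, hpx⟩ := hpX
    exact ⟨x, mem_filter.2 ⟨hx, hpx⟩⟩
  set x := N.max' hN
  obtain ⟨hxX, hpx⟩ := mem_filter.mp (N.max'_mem hN)
  have hyx : y x = p := (((hy x hxX).2 p).mp hpx.symm).resolve_left hpu |>.symm
  obtain ⟨s, hs⟩ : ((G.neighborFinset p).erase x).Nonempty := by
    rw [← card_pos, card_erase_of_mem ((G.mem_neighborFinset p x).2 hpx),
      G.card_neighborFinset_eq_degree]
    omega
  obtain ⟨hsx, hps⟩ := mem_erase.mp hs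
  rw [G.mem_neighborFinset] at hps
  have hs' : s ∉ X ∨ s < x := by
    by_cases hsX : s ∈ X
    · exact Or.inr (lt_of_le_of_ne (N.le_max' s (mem_filter.2 ⟨hsX, hps⟩)) hsx)
    · exact Or.inl hsX
  obtain ⟨hpT, hT'⟩ := hT x s (hyx ▸ hps) hs'
  exact ⟨x, T x, hpx, hyx ▸ hpT, hcX x hxX (T x) (by simp) hT'⟩

theorem exists_adj_color_ne_of_not_adj_mem (huv : G.Adj u v) (hvw : G.Adj v w) (hwu : G.Adj w u)
    (hcD : IsDynamicOn G (insert u (degTwoNeighbors G u v w))ᶜ c)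
    (hcu : ∀ q, G.Adj u q → q ∉ degTwoNeighbors G u v w → c u ≠ c q)
    {p : V} (hpD : p ∉ insert u (degTwoNeighbors G u v w)) (hp : 2 ≤ G.degree p)
    (hpX : ∀ x ∈ degTwoNeighbors G u v w, ¬ G.Adj p x) :
    ∃ a b, G.Adj p a ∧ G.Adj p b ∧ c a ≠ c b := by
  set X := degTwoNeighbors G u v w
  set S := (insert u X)ᶜ
  by_cases h2 : 2 ≤ #{q ∈ S | G.Adj p q}
  · obtain ⟨a, -, b, -, h⟩ := hcD.2 p (mem_compl.2 hpD) h2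
    exact ⟨a, b, h⟩
  have hsub : G.neighborFinset p ⊆ insert u {q ∈ S | G.Adj p q} := by
    intro q hq
    rw [G.mem_neighborFinset] at hq
    by_cases hqu : q = u
    · exact mem_insert.2 (Or.inl hqu)
    refine mem_insert_of_mem (mem_filter.2 ⟨mem_compl.2 ?_, hq⟩)
    rw [mem_insert, not_or]
    exact ⟨hqu, fun hqX => hpX q hqX hq⟩
  have hup : G.Adj u p := by
    by_contra h
    have := card_le_card ((subset_insert_iff_of_notMem fun hu => h
      ((G.mem_neighborFinset p u).1 hu).symm).1 hsub)
    rw [G.card_neighborFinset_eq_degree] at this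
    omega
  have hdeg : G.degree p = 2 := by
    have := (card_le_card hsub).trans (card_insert_le _ _)
    rw [G.card_neighborFinset_eq_degree] at this
    omega
  have hvw' : p = v ∨ p = w := by
    by_contra! h
    exact hpD (mem_insert_of_mem (mem_degTwoNeighbors.2 ⟨hup, hdeg, h.1, h.2⟩))
  rcases hvw' with rfl | rfl
  · exact ⟨u, w, hup.symm, hvw, hcu w hwu.symm fun h => (mem_degTwoNeighbors.1 h).2.2.2 rfl⟩
  · exact ⟨u, v, hup.symm, hvw.symm, hcu v huv fun h => (mem_degTwoNeighbors.1 h).2.2.1 rfl⟩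

theorem isDynamic_of_isDynamicOn_compl (huv : G.Adj u v) (hvw : G.Adj v w) (hwu : G.Adj w u)
    (hy : ∀ x ∈ degTwoNeighbors G u v w, y x ≠ u ∧ ∀ q, G.Adj x q ↔ q = u ∨ q = y x)
    (hT : ∀ x t, G.Adj (y x) t → (t ∉ degTwoNeighbors G u v w ∨ t < x) →
      G.Adj (y x) (T x) ∧ (T x ∉ degTwoNeighbors G u v w ∨ T x < x))
    (hcD : IsDynamicOn G (insert u (degTwoNeighbors G u v w))ᶜ c)
    (hcu : ∀ q, G.Adj u q → q ∉ degTwoNeighbors G u v w → c u ≠ c q)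
    (hcuy : ∀ x ∈ degTwoNeighbors G u v w, y x ∉ insert u (degTwoNeighbors G u v w) →
      c u ≠ c (y x))
    (hcX : ∀ x ∈ degTwoNeighbors G u v w, ∀ t ∈ ({u, y x, T x} : Finset V),
      (t ∉ degTwoNeighbors G u v w ∨ t < x) → c x ≠ c t) :
    IsDynamic G c := by
  set X := degTwoNeighbors G u v w
  have hXu : ∀ x ∈ X, G.Adj u x := fun x hx => (mem_degTwoNeighbors.1 hx).1
  have hproper := isProper_of_isDynamicOn_compl hXu hy hcD hcu hcX
  refine ⟨hproper, fun p hp => ?_⟩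
  rw [deg_eq_degree] at hp
  by_cases hpu : p = u
  · subst hpu
    exact ⟨v, w, huv, hwu.symm, hproper v w hvw⟩
  by_cases hpX : p ∈ X
  · refine ⟨u, y p, (hXu p hpX).symm, ((hy p hpX).2 _).2 (Or.inr rfl), ?_⟩
    by_cases hyX : y p ∈ X
    · exact (hcX _ hyX u (by simp) (Or.inl fun h => G.loopless.irrefl u (hXu u h))).symm
    · exact hcuy p hpX (by simp [(hy p hpX).1, hyX])
  by_cases hadj : ∃ x ∈ X, G.Adj p x
  · exact exists_adj_color_ne_of_adj_mem hy hT hcX hpu hp hadj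
  · push Not at hadj
    refine exists_adj_color_ne_of_not_adj_mem huv hvw hwu hcD hcu ?_ hp hadj
    rw [mem_insert, not_or]
    exact ⟨hpu, hpX⟩

theorem exists_isDynamic_extension (huv : G.Adj u v) (hvw : G.Adj v w) (hwu : G.Adj w u)
    {ℓ : ℕ} (hℓ : 4 ≤ ℓ) (hu : G.degree u < ℓ) (L : V → Finset ℕ) (hL : ∀ p, #(L p) = ℓ)
    (c₁ : V → ℕ) (hc₁L : ∀ p ∉ insert u (degTwoNeighbors G u v w), c₁ p ∈ L p)
    (hc₁ : IsDynamicOn G (insert u (degTwoNeighbors G u v w))ᶜ c₁) :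
    ∃ c : V → ℕ, (∀ p, c p ∈ L p) ∧ IsDynamic G c := by
  set X := degTwoNeighbors G u v w
  have huX : u ∉ X := fun h => G.loopless.irrefl u (mem_degTwoNeighbors.1 h).1
  obtain ⟨y, hy⟩ := exists_other_neighbor_of_mem_degTwoNeighbors G u v w
  have : Nonempty V := ⟨u⟩
  obtain ⟨T, hT⟩ : ∃ T : V → V, ∀ x t, G.Adj (y x) t → (t ∉ X ∨ t < x) →
      G.Adj (y x) (T x) ∧ (T x ∉ X ∨ T x < x) :=
    ⟨fun x => Classical.epsilon fun t => G.Adj (y x) t ∧ (t ∉ X ∨ t < x),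
      fun x t h₁ h₂ => Classical.epsilon_spec (p := fun t => G.Adj (y x) t ∧ (t ∉ X ∨ t < x))
        ⟨t, h₁, h₂⟩⟩
  obtain ⟨k, hkL, hk⟩ := exists_mem_notMem_of_card_lt_card (t := L u)
    (s := (G.neighborFinset u).image fun q => c₁ (if q ∈ X then y q else q))
    (by rw [hL]; exact card_image_le.trans_lt ((G.card_neighborFinset_eq_degree u).trans_lt hu))
  have hk' : ∀ q, G.Adj u q → k ≠ c₁ (if q ∈ X then y q else q) := fun q huq h =>
    hk (mem_image.2 ⟨q, (G.mem_neighborFinset u q).2 huq, h.symm⟩)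
  obtain ⟨c, hcX, hc⟩ := exists_greedy_coloring X (Function.update c₁ u k) L
    (fun x => {u, y x, T x}) fun x _ => by rw [hL]; exact card_le_three.trans_lt hℓ
  have hcu : c u = k := by rw [hcX u huX, Function.update_self]
  have hcD : ∀ p ∉ insert u X, c p = c₁ p := fun p hp => by
    rw [mem_insert, not_or] at hp
    rw [hcX p hp.2, Function.update_of_ne hp.1]
  refine ⟨c, fun p => ?_, isDynamic_of_isDynamicOn_compl huv hvw hwu hy hT
    (hc₁.congr fun p hp => (hcD p (mem_compl.1 hp)).symm) (fun q huq hqX => ?_)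
    (fun x hx hyx => ?_) fun x hx => (hc x hx).2⟩
  · by_cases hpX : p ∈ X
    · exact (hc p hpX).1
    by_cases hpu : p = u
    · rw [hpu, hcu]
      exact hkL
    have hpD : p ∉ insert u X := by rw [mem_insert, not_or]; exact ⟨hpu, hpX⟩
    rw [hcD p hpD]
    exact hc₁L p hpD
  · have hqD : q ∉ insert u X := by rw [mem_insert, not_or]; exact ⟨huq.ne.symm, hqX⟩
    rw [hcu, hcD q hqD]
    have := hk' q huq
    rwa [if_neg hqX] at this
  · rw [hcu, hcD _ hyx]
    have := hk' x (mem_degTwoNeighbors.1 hx).1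
    rwa [if_pos hx] at this

end Triangle

theorem dynMinimal_triangle_vertex_big (F : ∀ n : ℕ, SimpleGraph (Fin n) → Prop)
    (hF : Hereditary F) (ℓ : ℕ) (hl : 5 ≤ ℓ) {n : ℕ} (G : SimpleGraph (Fin n))
    (hG : DynMinimal F ℓ G) :
    ∀ u v w, G.Adj u v → G.Adj v w → G.Adj w u → ℓ ≤ deg G u := by
  classical
  intro u v w huv hvw hwu
  by_contra! hu
  refine hG.2.1 fun L hL => ?_
  obtain ⟨c₁, hc₁L, hc₁⟩ := hG.exists_isDynamicOn hF (insert u (degTwoNeighbors G u v w))ᶜ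
    (p := u) (by simp) L hL
  exact exists_isDynamic_extension huv hvw hwu (by omega) (by rwa [← deg_eq_degree]) L hL c₁
    (fun p hp => hc₁L p (mem_compl.2 hp)) hc₁
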